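/- arXiv:1909.00469 — 3 statements merged into one kernel-verified Lean document; each statement's English description precedes it below -/
import Mathlib

section
/- Let r, s, t, u be nonzero real numbers. The space B[C_f] = {x : B(r,s,t,u)x ∈ [C_f]} is a Banach space under the norm ‖x‖_{B[C_f]} = sup_{q,q′,m,n ∈ ℕ} (1/((q+1)(q′+1))) Σ_{k=m}^{m+q} Σ_{l=n}^{n+q′} |(Bx)_{kl}|; that is, this supremum is finite for every x ∈ B[C_f], it defines a norm on B[C_f], and every sequence of elements of B[C_f] that is Cauchy with respect to this norm converges in this norm to an element of B[C_f]. -/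
open Finset

noncomputable section

/-- The four-dimensional generalized difference matrix `B(r,s,t,u)` acting on a
double sequence `x : ℕ × ℕ → ℂ`; terms with a negative index are taken to be `0`. -/
def Btrans (r s t u : ℝ) (x : ℕ × ℕ → ℂ) : ℕ × ℕ → ℂ := fun p =>
  (s * u : ℂ) * (if p.1 = 0 ∨ p.2 = 0 then 0 else x (p.1 - 1, p.2 - 1)) +
  (s * t : ℂ) * (if p.1 = 0 then 0 else x (p.1 - 1, p.2)) +
  (r * u : ℂ) * (if p.2 = 0 then 0 else x (p.1, p.2 - 1)) +
  (r * t : ℂ) * x p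

/-- `x` is strongly almost convergent to `L` ("[f2]-lim x = L"). -/
def StronglyAlmostConvTo (x : ℕ × ℕ → ℂ) (L : ℂ) : Prop :=
  ∀ ε > (0 : ℝ), ∃ Q : ℕ, ∀ q q' : ℕ, Q ≤ q → Q ≤ q' → ∀ m n : ℕ,
    (1 / (((q : ℝ) + 1) * ((q' : ℝ) + 1))) *
      ∑ k ∈ Finset.range (q + 1), ∑ l ∈ Finset.range (q' + 1),
        ‖x (m + k, n + l) - L‖ < ε

/-- `x` is almost convergent to `L` ("f2-lim x = L"). -/
def AlmostConvTo (x : ℕ × ℕ → ℂ) (L : ℂ) : Prop :=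
  ∀ ε > (0 : ℝ), ∃ Q : ℕ, ∀ q q' : ℕ, Q ≤ q → Q ≤ q' → ∀ m n : ℕ,
    ‖(1 / (((q : ℂ) + 1) * ((q' : ℂ) + 1))) *
      (∑ k ∈ Finset.range (q + 1), ∑ l ∈ Finset.range (q' + 1), x (m + k, n + l)) - L‖ < ε

/-- The set of values whose supremum is the `[C_f]`-norm of `y`. -/
def CfNormSet (y : ℕ × ℕ → ℂ) : Set ℝ :=
  {v | ∃ q q' m n : ℕ, v = (1 / (((q : ℝ) + 1) * ((q' : ℝ) + 1))) *
    ∑ k ∈ Finset.range (q + 1), ∑ l ∈ Finset.range (q' + 1), ‖y (m + k, n + l)‖}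

/-- The `[C_f]`-norm. -/
def CfNorm (y : ℕ × ℕ → ℂ) : ℝ := sSup (CfNormSet y)

/-- The formal inverse transform of `B(r,s,t,u)`. -/
def Binv (r s t u : ℝ) (y : ℕ × ℕ → ℂ) : ℕ × ℕ → ℂ := fun p =>
  (1 / (r * t : ℂ)) * ∑ k ∈ Finset.range (p.1 + 1), ∑ l ∈ Finset.range (p.2 + 1),
    ((-s : ℂ) / r) ^ (p.1 - k) * ((-u : ℂ) / t) ^ (p.2 - l) * y (k, l)

/-- Pringsheim convergence of a double sequence. -/
def PConvTo (s : ℕ × ℕ → ℂ) (S : ℂ) : Prop :=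
  ∀ ε > (0 : ℝ), ∃ N : ℕ, ∀ m n : ℕ, N ≤ m → N ≤ n → ‖s (m, n) - S‖ < ε

/-- Boundedness of a double sequence. -/
def Bdd2 (s : ℕ × ℕ → ℂ) : Prop := ∃ M : ℝ, ∀ m n : ℕ, ‖s (m, n)‖ ≤ M

/-- bp-convergence: bounded Pringsheim convergence. -/
def BPConvTo (s : ℕ × ℕ → ℂ) (S : ℂ) : Prop := Bdd2 s ∧ PConvTo s S

/-- Rectangular partial sums of a double series. -/
def PartialSums (c : ℕ × ℕ → ℂ) : ℕ × ℕ → ℂ := fun p =>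
  ∑ k ∈ Finset.range (p.1 + 1), ∑ l ∈ Finset.range (p.2 + 1), c (k, l)

/-- bp-convergence of the double series `Σ c_{kl}`. -/
def BPSeriesConv (c : ℕ × ℕ → ℂ) : Prop := ∃ S, BPConvTo (PartialSums c) S

/-- Pringsheim convergence of a real double sequence. -/
def PConvToR (s : ℕ × ℕ → ℝ) (S : ℝ) : Prop :=
  ∀ ε > (0 : ℝ), ∃ N : ℕ, ∀ m n : ℕ, N ≤ m → N ≤ n → |s (m, n) - S| < ε

/-- bp-convergence of a real double sequence. -/
def BPConvToR (s : ℕ × ℕ → ℝ) (S : ℝ) : Prop :=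
  (∃ M : ℝ, ∀ m n : ℕ, |s (m, n)| ≤ M) ∧ PConvToR s S

/-- The rectangle `{(j,k) : m ≤ j ≤ m+p-1, n ≤ k ≤ n+q-1}`. -/
def rectSet (m n p q : ℕ) : Set (ℕ × ℕ) :=
  {jk | m ≤ jk.1 ∧ jk.1 ≤ m + p - 1 ∧ n ≤ jk.2 ∧ jk.2 ≤ n + q - 1}

/-- `E` is uniformly of zero density. -/
def UnifZeroDensity (E : Set (ℕ × ℕ)) : Prop :=
  ∀ ε > (0 : ℝ), ∃ P : ℕ, ∀ p q : ℕ, P ≤ p → P ≤ q → ∀ m n : ℕ,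
    ((E ∩ rectSet m n p q).ncard : ℝ) ≤ ε * p * q

/-- The inner sums `Σ_{j=k}^{m} Σ_{i=l}^{n} (−s/r)^{j−k} (−u/t)^{i−l} a_{ji}`. -/
def innerS (r s t u : ℝ) (a : ℕ × ℕ → ℂ) (k l m n : ℕ) : ℂ :=
  ∑ j ∈ Finset.Icc k m, ∑ i ∈ Finset.Icc l n,
    ((-s : ℂ) / r) ^ (j - k) * ((-u : ℂ) / t) ^ (i - l) * a (j, i)

/-- The matrix `d_{mnkl}(a)` (taken to be `0` when `k > m` or `l > n`). -/
def dmat (r s t u : ℝ) (a : ℕ × ℕ → ℂ) (m n k l : ℕ) : ℂ :=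
  innerS r s t u a k l m n / (r * t : ℂ)

/-- The double difference `Δ₁₁ a_{mnkl}`. -/
def Delta11 (A : ℕ × ℕ → ℕ × ℕ → ℂ) (m n k l : ℕ) : ℂ :=
  A (m, n) (k, l) - A (m, n) (k + 1, l) - A (m, n) (k, l + 1) + A (m, n) (k + 1, l + 1)

/-- The matrix `e_{mnkl}` associated with a four-dimensional matrix `A`
(taken to be `0` when `k > m` or `l > n`). -/
def emat (r s t u : ℝ) (A : ℕ × ℕ → ℕ × ℕ → ℂ) (m n k l : ℕ) : ℂ :=
  ∑ i ∈ Finset.Icc k m, ∑ j ∈ Finset.Icc l n,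
    ((-s : ℂ) / r) ^ (i - k) * ((-u : ℂ) / t) ^ (j - l) * A (m, n) (i, j) / (r * t : ℂ)

/-- `Δ₁₁` applied to the `e`-matrix. -/
def Delta11e (r s t u : ℝ) (A : ℕ × ℕ → ℕ × ℕ → ℂ) (m n k l : ℕ) : ℂ :=
  emat r s t u A m n k l - emat r s t u A m n (k + 1) l -
    emat r s t u A m n k (l + 1) + emat r s t u A m n (k + 1) (l + 1)

end


/-!
Since `r t ≠ 0`, `B(r,s,t,u)` is lower triangular with invertible diagonal, so it is a linear
bijection of the double sequences (its inverse is computed by recursion on `m + n`), and the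
theorem reduces to `[C_f]` with `‖y‖ = sup` of the window averages of `|y|`. Strongly almost
convergent sequences are bounded, and on bounded sequences this norm is the sup norm (one-point
windows give `≥`, averaging gives `≤`). A Cauchy sequence `y_i → L_i` therefore converges
uniformly to some `g`; the `L_i` form a Cauchy sequence because `|L| ≤ ‖y‖` whenever `y → L`
strongly, and a uniform limit of sequences `y_i → L_i` is strongly almost convergent to `lim L_i`.
-/

open Filter Topology

noncomputable section

section WindowMean

def windowMean (f : ℕ × ℕ → ℝ) (q q' m n : ℕ) : ℝ :=
  (1 / (((q : ℝ) + 1) * ((q' : ℝ) + 1))) *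
    ∑ k ∈ range (q + 1), ∑ l ∈ range (q' + 1), f (m + k, n + l)

variable {f g : ℕ × ℕ → ℝ} (q q' m n : ℕ)

theorem windowMean_mono (h : ∀ p, f p ≤ g p) : windowMean f q q' m n ≤ windowMean g q q' m n := by
  unfold windowMean
  gcongr with k _ l _
  exact h _

theorem windowMean_add :
    windowMean (fun p => f p + g p) q q' m n = windowMean f q q' m n + windowMean g q q' m n := by
  simp only [windowMean, sum_add_distrib]
  ring

theorem windowMean_const (c : ℝ) : windowMean (fun _ => c) q q' m n = c := by
  simp only [windowMean, sum_const, card_range, nsmul_eq_mul]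
  push_cast
  field_simp

theorem windowMean_mul_left (c : ℝ) :
    windowMean (fun p => c * f p) q q' m n = c * windowMean f q q' m n := by
  simp only [windowMean, ← mul_sum]
  ring

theorem windowMean_nonneg (h : ∀ p, 0 ≤ f p) : 0 ≤ windowMean f q q' m n :=
  (windowMean_const q q' m n 0).symm.le.trans (windowMean_mono q q' m n h)

theorem windowMean_le {c : ℝ} (h : ∀ p, f p ≤ c) : windowMean f q q' m n ≤ c :=
  (windowMean_mono q q' m n h).trans_eq (windowMean_const q q' m n c)

theorem windowMean_zero_zero : windowMean f 0 0 m n = f (m, n) := by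
  simp [windowMean]

theorem le_mul_windowMean (h : ∀ p, 0 ≤ f p) :
    f (m, n) ≤ ((q : ℝ) + 1) * ((q' : ℝ) + 1) * windowMean f q q' m n := by
  rw [windowMean, ← mul_assoc, mul_one_div_cancel (by positivity), one_mul]
  calc f (m, n) = f (m + 0, n + 0) := rfl
    _ ≤ ∑ l ∈ range (q' + 1), f (m + 0, n + l) :=
        single_le_sum (f := fun l => f (m + 0, n + l)) (fun _ _ => h _)
          (mem_range.2 q'.succ_pos)
    _ ≤ ∑ k ∈ range (q + 1), ∑ l ∈ range (q' + 1), f (m + k, n + l) :=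
        single_le_sum (f := fun k => ∑ l ∈ range (q' + 1), f (m + k, n + l))
          (fun _ _ => sum_nonneg fun _ _ => h _) (mem_range.2 q.succ_pos)

end WindowMean

section CfNorm

variable {y z : ℕ × ℕ → ℂ}

theorem windowMean_mem_cfNormSet (y : ℕ × ℕ → ℂ) (q q' m n : ℕ) :
    windowMean (fun p => ‖y p‖) q q' m n ∈ CfNormSet y :=
  ⟨q, q', m, n, rfl⟩

theorem cfNormSet_nonempty (y : ℕ × ℕ → ℂ) : (CfNormSet y).Nonempty :=
  ⟨_, windowMean_mem_cfNormSet y 0 0 0 0⟩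

theorem bddAbove_cfNormSet {c : ℝ} (h : ∀ p, ‖y p‖ ≤ c) : BddAbove (CfNormSet y) :=
  ⟨c, by rintro _ ⟨q, q', m, n, rfl⟩; exact windowMean_le q q' m n h⟩

theorem cfNorm_le {c : ℝ} (h : ∀ p, ‖y p‖ ≤ c) : CfNorm y ≤ c :=
  csSup_le (cfNormSet_nonempty y) (by rintro _ ⟨q, q', m, n, rfl⟩; exact windowMean_le q q' m n h)

theorem windowMean_le_cfNorm (hy : BddAbove (CfNormSet y)) (q q' m n : ℕ) :
    windowMean (fun p => ‖y p‖) q q' m n ≤ CfNorm y :=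
  le_csSup hy (windowMean_mem_cfNormSet y q q' m n)

theorem norm_le_cfNorm (hy : BddAbove (CfNormSet y)) (p : ℕ × ℕ) : ‖y p‖ ≤ CfNorm y := by
  simpa only [windowMean_zero_zero] using windowMean_le_cfNorm hy 0 0 p.1 p.2

theorem cfNorm_nonneg (y : ℕ × ℕ → ℂ) : 0 ≤ CfNorm y :=
  Real.sSup_nonneg <| by
    rintro _ ⟨q, q', m, n, rfl⟩
    exact windowMean_nonneg q q' m n fun _ => norm_nonneg _

theorem cfNorm_eq_zero_iff (hy : BddAbove (CfNormSet y)) : CfNorm y = 0 ↔ y = 0 := by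
  refine ⟨fun h => funext fun p => norm_eq_zero.1 ?_, fun h => ?_⟩
  · exact le_antisymm (h ▸ norm_le_cfNorm hy p) (norm_nonneg _)
  · subst h
    exact (cfNorm_le fun _ => norm_zero.le).antisymm (cfNorm_nonneg 0)

open Pointwise in
theorem cfNorm_smul (c : ℂ) (y : ℕ × ℕ → ℂ) : CfNorm (c • y) = ‖c‖ * CfNorm y := by
  have hmean (q q' m n : ℕ) : windowMean (fun p => ‖(c • y) p‖) q q' m n =
      ‖c‖ * windowMean (fun p => ‖y p‖) q q' m n := by
    simp only [Pi.smul_apply, smul_eq_mul, norm_mul]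
    exact windowMean_mul_left q q' m n ‖c‖
  have hset : CfNormSet (c • y) = ‖c‖ • CfNormSet y := by
    ext v
    simp only [Set.mem_smul_set, smul_eq_mul]
    constructor
    · rintro ⟨q, q', m, n, rfl⟩
      exact ⟨_, windowMean_mem_cfNormSet y q q' m n, (hmean q q' m n).symm⟩
    · rintro ⟨_, ⟨q, q', m, n, rfl⟩, rfl⟩
      exact ⟨q, q', m, n, (hmean q q' m n).symm⟩
  rw [CfNorm, CfNorm, hset, Real.sSup_smul_of_nonneg (norm_nonneg c), smul_eq_mul]

theorem cfNorm_add_le (hy : BddAbove (CfNormSet y)) (hz : BddAbove (CfNormSet z)) :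
    CfNorm (y + z) ≤ CfNorm y + CfNorm z := by
  refine csSup_le (cfNormSet_nonempty _) ?_
  rintro _ ⟨q, q', m, n, rfl⟩
  calc windowMean (fun p => ‖(y + z) p‖) q q' m n
      ≤ windowMean (fun p => ‖y p‖ + ‖z p‖) q q' m n :=
        windowMean_mono q q' m n fun p => norm_add_le (y p) (z p)
    _ = windowMean (fun p => ‖y p‖) q q' m n + windowMean (fun p => ‖z p‖) q q' m n :=
        windowMean_add q q' m n
    _ ≤ CfNorm y + CfNorm z :=
        add_le_add (windowMean_le_cfNorm hy q q' m n) (windowMean_le_cfNorm hz q q' m n)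

end CfNorm

section StronglyAlmostConv

theorem stronglyAlmostConvTo_iff {y : ℕ × ℕ → ℂ} {L : ℂ} :
    StronglyAlmostConvTo y L ↔ ∀ ε > (0 : ℝ), ∃ Q : ℕ, ∀ q q' : ℕ, Q ≤ q → Q ≤ q' → ∀ m n : ℕ,
      windowMean (fun p => ‖y p - L‖) q q' m n < ε :=
  Iff.rfl

namespace StronglyAlmostConvTo

variable {y z : ℕ × ℕ → ℂ} {L M : ℂ}

theorem exists_norm_le (h : StronglyAlmostConvTo y L) : ∃ C, ∀ p, ‖y p‖ ≤ C := by
  obtain ⟨Q, hQ⟩ := stronglyAlmostConvTo_iff.1 h 1 one_pos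
  refine ⟨‖L‖ + ((Q : ℝ) + 1) * ((Q : ℝ) + 1), fun p => ?_⟩
  have hdev : ‖y p - L‖ ≤ ((Q : ℝ) + 1) * ((Q : ℝ) + 1) :=
    (le_mul_windowMean (f := fun p => ‖y p - L‖) Q Q p.1 p.2 fun _ => norm_nonneg _).trans
      (mul_le_of_le_one_right (by positivity) (hQ Q Q le_rfl le_rfl p.1 p.2).le)
  linarith [norm_le_norm_add_norm_sub' (y p) L]

theorem bddAbove_cfNormSet (h : StronglyAlmostConvTo y L) : BddAbove (CfNormSet y) :=
  let ⟨_, hC⟩ := h.exists_norm_le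
  _root_.bddAbove_cfNormSet hC

theorem sub (hy : StronglyAlmostConvTo y L) (hz : StronglyAlmostConvTo z M) :
    StronglyAlmostConvTo (y - z) (L - M) := by
  rw [stronglyAlmostConvTo_iff] at *
  intro ε hε
  obtain ⟨Q₁, h₁⟩ := hy (ε / 2) (half_pos hε)
  obtain ⟨Q₂, h₂⟩ := hz (ε / 2) (half_pos hε)
  refine ⟨max Q₁ Q₂, fun q q' hq hq' m n => ?_⟩
  rw [max_le_iff] at hq hq'
  calc windowMean (fun p => ‖(y - z) p - (L - M)‖) q q' m n
      ≤ windowMean (fun p => ‖y p - L‖ + ‖z p - M‖) q q' m n :=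
        windowMean_mono q q' m n fun p => by
          simpa only [Pi.sub_apply, sub_sub_sub_comm] using norm_sub_le (y p - L) (z p - M)
    _ = windowMean (fun p => ‖y p - L‖) q q' m n + windowMean (fun p => ‖z p - M‖) q q' m n :=
        windowMean_add q q' m n
    _ < ε / 2 + ε / 2 := add_lt_add (h₁ q q' hq.1 hq'.1 m n) (h₂ q q' hq.2 hq'.2 m n)
    _ = ε := add_halves ε

theorem norm_le_cfNorm (h : StronglyAlmostConvTo y L) : ‖L‖ ≤ CfNorm y := by
  refine le_of_forall_pos_lt_add fun ε hε => ?_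
  obtain ⟨Q, hQ⟩ := stronglyAlmostConvTo_iff.1 h ε hε
  calc ‖L‖ = windowMean (fun _ => ‖L‖) Q Q 0 0 := (windowMean_const Q Q 0 0 _).symm
    _ ≤ windowMean (fun p => ‖y p‖ + ‖y p - L‖) Q Q 0 0 :=
        windowMean_mono Q Q 0 0 fun p => norm_le_norm_add_norm_sub (y p) L
    _ = windowMean (fun p => ‖y p‖) Q Q 0 0 + windowMean (fun p => ‖y p - L‖) Q Q 0 0 :=
        windowMean_add Q Q 0 0
    _ < CfNorm y + ε :=
        add_lt_add_of_le_of_lt (windowMean_le_cfNorm h.bddAbove_cfNormSet Q Q 0 0)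
          (hQ Q Q le_rfl le_rfl 0 0)

end StronglyAlmostConvTo

theorem stronglyAlmostConvTo_of_forall_approx {g : ℕ × ℕ → ℂ} {L₀ : ℂ}
    (h : ∀ ε > (0 : ℝ), ∃ y L, StronglyAlmostConvTo y L ∧ ‖L - L₀‖ ≤ ε ∧ ∀ p, ‖g p - y p‖ ≤ ε) :
    StronglyAlmostConvTo g L₀ := by
  intro ε hε
  obtain ⟨y, L, hy, hL, hgy⟩ := h (ε / 3) (by positivity)
  obtain ⟨Q, hQ⟩ := stronglyAlmostConvTo_iff.1 hy (ε / 3) (by positivity)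
  refine ⟨Q, fun q q' hq hq' m n => ?_⟩
  calc windowMean (fun p => ‖g p - L₀‖) q q' m n
      ≤ windowMean (fun p => ‖y p - L‖ + 2 * (ε / 3)) q q' m n :=
        windowMean_mono q q' m n fun p => by
          have := norm_add₃_le (a := g p - y p) (b := y p - L) (c := L - L₀)
          rw [sub_add_sub_cancel, sub_add_sub_cancel] at this
          linarith [hgy p]
    _ = windowMean (fun p => ‖y p - L‖) q q' m n + 2 * (ε / 3) := by
        rw [windowMean_add, windowMean_const]
    _ < ε / 3 + 2 * (ε / 3) := by gcongr; exact hQ q q' hq hq' m n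
    _ = ε := by ring

theorem exists_tendsto_cfNorm_of_cauchy (G : ℕ → ℕ × ℕ → ℂ)
    (hG : ∀ i, ∃ L, StronglyAlmostConvTo (G i) L)
    (hC : ∀ ε > (0 : ℝ), ∃ N : ℕ, ∀ i j : ℕ, N ≤ i → N ≤ j → CfNorm (G i - G j) < ε) :
    ∃ g : ℕ × ℕ → ℂ, (∃ L, StronglyAlmostConvTo g L) ∧
      ∀ ε > (0 : ℝ), ∃ N : ℕ, ∀ i : ℕ, N ≤ i → CfNorm (G i - g) < ε := by
  choose L hL using hG
  have hdiff i j : StronglyAlmostConvTo (G i - G j) (L i - L j) := (hL i).sub (hL j)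
  have hpt (p : ℕ × ℕ) : CauchySeq fun i => G i p :=
    Metric.cauchySeq_iff.2 fun ε hε => (hC ε hε).imp fun _ hN i hi j hj => by
      rw [dist_eq_norm]
      exact (norm_le_cfNorm (hdiff i j).bddAbove_cfNormSet p).trans_lt (hN i j hi hj)
  choose g hg using fun p => cauchySeq_tendsto_of_complete (hpt p)
  have hLcauchy : CauchySeq L :=
    Metric.cauchySeq_iff.2 fun ε hε => (hC ε hε).imp fun _ hN i hi j hj => by
      rw [dist_eq_norm]
      exact (hdiff i j).norm_le_cfNorm.trans_lt (hN i j hi hj)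
  obtain ⟨L₀, hL₀⟩ := cauchySeq_tendsto_of_complete hLcauchy
  have huniform : ∀ ε > (0 : ℝ), ∃ N, ∀ i, N ≤ i → ∀ p, ‖G i p - g p‖ ≤ ε := by
    intro ε hε
    obtain ⟨N, hN⟩ := hC ε hε
    refine ⟨N, fun i hi p => le_of_tendsto (tendsto_const_nhds.sub (hg p)).norm ?_⟩
    exact eventually_atTop.2 ⟨N, fun j hj =>
      (norm_le_cfNorm (hdiff i j).bddAbove_cfNormSet p).trans (hN i j hi hj).le⟩
  refine ⟨g, ⟨L₀, stronglyAlmostConvTo_of_forall_approx fun ε hε => ?_⟩, fun ε hε => ?_⟩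
  · obtain ⟨N₁, h₁⟩ := huniform ε hε
    obtain ⟨N₂, h₂⟩ := Metric.tendsto_atTop.1 hL₀ ε hε
    refine ⟨G (max N₁ N₂), L (max N₁ N₂), hL _, ?_, fun p => ?_⟩
    · rw [← dist_eq_norm]
      exact (h₂ _ (le_max_right _ _)).le
    · rw [norm_sub_rev]
      exact h₁ _ (le_max_left _ _) p
  · obtain ⟨N, hN⟩ := huniform (ε / 2) (half_pos hε)
    exact ⟨N, fun i hi => (cfNorm_le (hN i hi)).trans_lt (half_lt_self hε)⟩

end StronglyAlmostConv

section Btrans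

def btransLinearMap (r s t u : ℝ) : (ℕ × ℕ → ℂ) →ₗ[ℂ] (ℕ × ℕ → ℂ) where
  toFun := Btrans r s t u
  map_add' x z := by
    funext p
    simp only [Btrans, Pi.add_apply]
    split_ifs <;> ring
  map_smul' c x := by
    funext p
    simp only [Btrans, Pi.smul_apply, smul_eq_mul, RingHom.id_apply]
    split_ifs <;> ring

variable {r s t u : ℝ}

theorem btrans_add (x z : ℕ × ℕ → ℂ) :
    Btrans r s t u (x + z) = Btrans r s t u x + Btrans r s t u z :=
  map_add (btransLinearMap r s t u) x z

theorem btrans_sub (x z : ℕ × ℕ → ℂ) :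
    Btrans r s t u (x - z) = Btrans r s t u x - Btrans r s t u z :=
  map_sub (btransLinearMap r s t u) x z

theorem btrans_smul (c : ℂ) (x : ℕ × ℕ → ℂ) : Btrans r s t u (c • x) = c • Btrans r s t u x :=
  map_smul (btransLinearMap r s t u) c x

theorem btrans_eq_zero_iff (hr : r ≠ 0) (ht : t ≠ 0) {x : ℕ × ℕ → ℂ} :
    Btrans r s t u x = 0 ↔ x = 0 := by
  refine ⟨fun h => funext fun p => ?_, fun h => h ▸ map_zero (btransLinearMap r s t u)⟩
  induction p using (measure fun p : ℕ × ℕ => p.1 + p.2).wf.induction with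
  | _ p ih =>
    obtain ⟨m, n⟩ := p
    have hp := congrFun h (m, n)
    simp only [Btrans, Pi.zero_apply] at hp
    have earlier (a b : ℕ) (hab : a + b < m + n) : x (a, b) = 0 := ih (a, b) hab
    have h₁ : (if m = 0 ∨ n = 0 then 0 else x (m - 1, n - 1)) = 0 :=
      ite_eq_left_iff.2 fun hc => earlier _ _ (by omega)
    have h₂ : (if m = 0 then 0 else x (m - 1, n)) = 0 :=
      ite_eq_left_iff.2 fun hc => earlier _ _ (by omega)
    have h₃ : (if n = 0 then 0 else x (m, n - 1)) = 0 :=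
      ite_eq_left_iff.2 fun hc => earlier _ _ (by omega)
    rw [h₁, h₂, h₃] at hp
    simpa [hr, ht] using hp

def btransRightInv (r s t u : ℝ) (g : ℕ × ℕ → ℂ) : ℕ × ℕ → ℂ := fun p =>
  (g p
      - (s * u : ℂ) *
        (if h : p.1 = 0 ∨ p.2 = 0 then 0 else btransRightInv r s t u g (p.1 - 1, p.2 - 1))
      - (s * t : ℂ) * (if h : p.1 = 0 then 0 else btransRightInv r s t u g (p.1 - 1, p.2))
      - (r * u : ℂ) * (if h : p.2 = 0 then 0 else btransRightInv r s t u g (p.1, p.2 - 1)))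
    / (r * t : ℂ)
  termination_by p => p.1 + p.2
  decreasing_by all_goals omega

theorem btrans_btransRightInv (hr : r ≠ 0) (ht : t ≠ 0) (g : ℕ × ℕ → ℂ) :
    Btrans r s t u (btransRightInv r s t u g) = g := by
  have hr' : (r : ℂ) ≠ 0 := by exact_mod_cast hr
  have ht' : (t : ℂ) ≠ 0 := by exact_mod_cast ht
  funext p
  simp only [Btrans]
  nth_rewrite 4 [btransRightInv]
  simp only [dite_eq_ite]
  field_simp
  ring

end Btrans

theorem stmt1_general (r s t u : ℝ) (hr : r ≠ 0) (ht : t ≠ 0) :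
    -- the supremum is finite for every member of B[C_f]
    (∀ x : ℕ × ℕ → ℂ, (∃ L, StronglyAlmostConvTo (Btrans r s t u x) L) →
      BddAbove (CfNormSet (Btrans r s t u x))) ∧
    -- norm axioms on B[C_f]
    (∀ x : ℕ × ℕ → ℂ, (∃ L, StronglyAlmostConvTo (Btrans r s t u x) L) →
      (CfNorm (Btrans r s t u x) = 0 ↔ x = 0)) ∧
    (∀ x : ℕ × ℕ → ℂ, (∃ L, StronglyAlmostConvTo (Btrans r s t u x) L) →
      0 ≤ CfNorm (Btrans r s t u x)) ∧
    (∀ (c : ℂ) (x : ℕ × ℕ → ℂ), (∃ L, StronglyAlmostConvTo (Btrans r s t u x) L) →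
      CfNorm (Btrans r s t u (c • x)) = ‖c‖ * CfNorm (Btrans r s t u x)) ∧
    (∀ x z : ℕ × ℕ → ℂ, (∃ L, StronglyAlmostConvTo (Btrans r s t u x) L) →
      (∃ L, StronglyAlmostConvTo (Btrans r s t u z) L) →
      CfNorm (Btrans r s t u (x + z)) ≤
        CfNorm (Btrans r s t u x) + CfNorm (Btrans r s t u z)) ∧
    -- completeness: every Cauchy sequence in (B[C_f], ‖·‖) converges in norm to a member of B[C_f]
    (∀ F : ℕ → (ℕ × ℕ → ℂ), (∀ i, ∃ L, StronglyAlmostConvTo (Btrans r s t u (F i)) L) →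
      (∀ ε > (0 : ℝ), ∃ N : ℕ, ∀ i j : ℕ, N ≤ i → N ≤ j →
        CfNorm (Btrans r s t u (F i - F j)) < ε) →
      ∃ x : ℕ × ℕ → ℂ, (∃ L, StronglyAlmostConvTo (Btrans r s t u x) L) ∧
        ∀ ε > (0 : ℝ), ∃ N : ℕ, ∀ i : ℕ, N ≤ i →
          CfNorm (Btrans r s t u (F i - x)) < ε) := by
  refine ⟨fun x ⟨_, hx⟩ => hx.bddAbove_cfNormSet,
    fun x ⟨_, hx⟩ => (cfNorm_eq_zero_iff hx.bddAbove_cfNormSet).trans (btrans_eq_zero_iff hr ht),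
    fun x _ => cfNorm_nonneg _,
    fun c x _ => by rw [btrans_smul, cfNorm_smul],
    fun x z ⟨_, hx⟩ ⟨_, hz⟩ =>
      btrans_add x z ▸ cfNorm_add_le hx.bddAbove_cfNormSet hz.bddAbove_cfNormSet,
    fun F hF hC => ?_⟩
  obtain ⟨g, hg, hlim⟩ := exists_tendsto_cfNorm_of_cauchy (fun i => Btrans r s t u (F i)) hF
    (by simpa only [btrans_sub] using hC)
  refine ⟨btransRightInv r s t u g, by rwa [btrans_btransRightInv hr ht], ?_⟩
  simpa only [btrans_sub, btrans_btransRightInv hr ht] using hlim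

/-- `B[C_f] = {x : B(r,s,t,u)x ∈ [C_f]}` is a Banach space under the norm
`‖x‖ = sup_{q,q',m,n} (1/((q+1)(q'+1))) Σ |(Bx)_{kl}|`. -/
theorem stmt1 (r s t u : ℝ) (hr : r ≠ 0) (hs : s ≠ 0) (ht : t ≠ 0) (hu : u ≠ 0) :
    -- the supremum is finite for every member of B[C_f]
    (∀ x : ℕ × ℕ → ℂ, (∃ L, StronglyAlmostConvTo (Btrans r s t u x) L) →
      BddAbove (CfNormSet (Btrans r s t u x))) ∧
    -- norm axioms on B[C_f]
    (∀ x : ℕ × ℕ → ℂ, (∃ L, StronglyAlmostConvTo (Btrans r s t u x) L) →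
      (CfNorm (Btrans r s t u x) = 0 ↔ x = 0)) ∧
    (∀ x : ℕ × ℕ → ℂ, (∃ L, StronglyAlmostConvTo (Btrans r s t u x) L) →
      0 ≤ CfNorm (Btrans r s t u x)) ∧
    (∀ (c : ℂ) (x : ℕ × ℕ → ℂ), (∃ L, StronglyAlmostConvTo (Btrans r s t u x) L) →
      CfNorm (Btrans r s t u (c • x)) = ‖c‖ * CfNorm (Btrans r s t u x)) ∧
    (∀ x z : ℕ × ℕ → ℂ, (∃ L, StronglyAlmostConvTo (Btrans r s t u x) L) →
      (∃ L, StronglyAlmostConvTo (Btrans r s t u z) L) →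
      CfNorm (Btrans r s t u (x + z)) ≤
        CfNorm (Btrans r s t u x) + CfNorm (Btrans r s t u z)) ∧
    -- completeness: every Cauchy sequence in (B[C_f], ‖·‖) converges in norm to a member of B[C_f]
    (∀ F : ℕ → (ℕ × ℕ → ℂ), (∀ i, ∃ L, StronglyAlmostConvTo (Btrans r s t u (F i)) L) →
      (∀ ε > (0 : ℝ), ∃ N : ℕ, ∀ i j : ℕ, N ≤ i → N ≤ j →
        CfNorm (Btrans r s t u (F i - F j)) < ε) →
      ∃ x : ℕ × ℕ → ℂ, (∃ L, StronglyAlmostConvTo (Btrans r s t u x) L) ∧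
        ∀ ε > (0 : ℝ), ∃ N : ℕ, ∀ i : ℕ, N ≤ i →
          CfNorm (Btrans r s t u (F i - x)) < ε) :=
  stmt1_general r s t u hr ht
end
end

section
/- Let r, t be nonzero real numbers and set s = −r, u = −t. Then [C_f] ⊆ B[C_f]: if a double sequence x is strongly almost convergent (to some L), then B(r,−r,t,−t)x is strongly almost convergent (indeed strongly almost null). -/
open Finset

/-!
`B(r,s,t,u) = su·S₁S₂ + st·S₁ + ru·S₂ + rt·I`, where `S₁`, `S₂` are the zero-padded shifts
in the two indices. Strong almost convergence is preserved by sums and scalar multiples, and a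
shift does not change the limit: on a `(q+1) × (q'+1)` window it only replaces one row of the
window by the padding `0`, which costs `‖L‖ / (q+1)` in the average. Hence `B x` tends to
`(su + st + ru + rt) L = (r+s)(t+u) L`, which vanishes for `s = -r`.
-/

def shiftFst (x : ℕ × ℕ → ℂ) : ℕ × ℕ → ℂ := fun p => if p.1 = 0 then 0 else x (p.1 - 1, p.2)

def shiftSnd (x : ℕ × ℕ → ℂ) : ℕ × ℕ → ℂ := fun p => if p.2 = 0 then 0 else x (p.1, p.2 - 1)

lemma Btrans_eq_shifts (r s t u : ℝ) (x : ℕ × ℕ → ℂ) :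
    Btrans r s t u x = ((s : ℂ) * u) • shiftFst (shiftSnd x) + ((s : ℂ) * t) • shiftFst x +
      ((r : ℂ) * u) • shiftSnd x + ((r : ℂ) * t) • x := by
  funext ⟨m, n⟩
  by_cases hm : m = 0 <;> by_cases hn : n = 0 <;> simp [Btrans, shiftFst, shiftSnd, hm, hn]

/-- `StronglyAlmostConvTo x L` says, definitionally, that `windowAvg x L q q' m n < ε`
for all `m, n` once `q, q'` are large. -/
noncomputable def windowAvg (x : ℕ × ℕ → ℂ) (L : ℂ) (q q' m n : ℕ) : ℝ :=
  1 / (((q : ℝ) + 1) * ((q' : ℝ) + 1)) *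
    ∑ k ∈ range (q + 1), ∑ l ∈ range (q' + 1), ‖x (m + k, n + l) - L‖

lemma windowAvg_nonneg (x : ℕ × ℕ → ℂ) (L : ℂ) (q q' m n : ℕ) : 0 ≤ windowAvg x L q q' m n := by
  unfold windowAvg; positivity

lemma windowAvg_add_le (x y : ℕ × ℕ → ℂ) (L M : ℂ) (q q' m n : ℕ) :
    windowAvg (x + y) (L + M) q q' m n ≤ windowAvg x L q q' m n + windowAvg y M q q' m n := by
  unfold windowAvg
  rw [← mul_add, ← sum_add_distrib]
  gcongr with k _ l _
  rw [← sum_add_distrib]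
  gcongr with l _
  rw [Pi.add_apply, add_sub_add_comm]
  exact norm_add_le _ _

lemma windowAvg_smul (c : ℂ) (x : ℕ × ℕ → ℂ) (L : ℂ) (q q' m n : ℕ) :
    windowAvg (c • x) (c • L) q q' m n = ‖c‖ * windowAvg x L q q' m n := by
  simp only [windowAvg, Pi.smul_apply, ← smul_sub, norm_smul, ← mul_sum]
  ring

lemma windowAvg_comp_swap (x : ℕ × ℕ → ℂ) (L : ℂ) (q q' m n : ℕ) :
    windowAvg (x ∘ Prod.swap) L q q' m n = windowAvg x L q' q n m := by
  simp only [windowAvg, Function.comp_apply, Prod.swap_prod_mk, mul_comm ((q : ℝ) + 1)]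
  rw [sum_comm]

lemma windowAvg_shiftFst_le (x : ℕ × ℕ → ℂ) (L : ℂ) (q q' m n : ℕ) :
    windowAvg (shiftFst x) L q q' m n ≤ ‖L‖ / ((q : ℝ) + 1) + windowAvg x L q q' (m - 1) n := by
  have hsum : ∑ k ∈ range (q + 1), ∑ l ∈ range (q' + 1), ‖shiftFst x (m + k, n + l) - L‖ ≤
      ((q' : ℝ) + 1) * ‖L‖ + ∑ k ∈ range (q + 1), ∑ l ∈ range (q' + 1), ‖x (m - 1 + k, n + l) - L‖ := by
    rcases m with _ | m
    · rw [sum_range_succ']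
      simp only [shiftFst, zero_add, Nat.add_eq_zero_iff, one_ne_zero, and_false, ↓reduceIte,
        add_tsub_cancel_right, zero_sub, norm_neg, sum_const, card_range, nsmul_eq_mul,
        Nat.cast_add, Nat.cast_one, add_comm, zero_tsub, add_le_add_iff_left]
      exact sum_le_sum_of_subset_of_nonneg (range_subset_range.2 q.le_succ)
        fun _ _ _ => sum_nonneg fun _ _ => norm_nonneg _
    · simp only [shiftFst, Nat.add_eq_zero_iff, one_ne_zero, and_false, false_and, ↓reduceIte,
        Nat.succ_add_sub_one, add_tsub_cancel_right, le_add_iff_nonneg_left]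
      positivity
  unfold windowAvg
  calc _ ≤ 1 / (((q : ℝ) + 1) * ((q' : ℝ) + 1)) * (((q' : ℝ) + 1) * ‖L‖ +
          ∑ k ∈ range (q + 1), ∑ l ∈ range (q' + 1), ‖x (m - 1 + k, n + l) - L‖) := by gcongr
    _ = _ := by field_simp

section
variable {x y : ℕ × ℕ → ℂ} {L M : ℂ}

lemma StronglyAlmostConvTo.add (hx : StronglyAlmostConvTo x L) (hy : StronglyAlmostConvTo y M) :
    StronglyAlmostConvTo (x + y) (L + M) := by
  intro ε hε
  obtain ⟨Q₁, h₁⟩ := hx (ε / 2) (half_pos hε)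
  obtain ⟨Q₂, h₂⟩ := hy (ε / 2) (half_pos hε)
  refine ⟨max Q₁ Q₂, fun q q' hq hq' m n => ?_⟩
  rw [max_le_iff] at hq hq'
  calc windowAvg (x + y) (L + M) q q' m n
      ≤ windowAvg x L q q' m n + windowAvg y M q q' m n := windowAvg_add_le x y L M q q' m n
    _ < ε / 2 + ε / 2 := add_lt_add (h₁ q q' hq.1 hq'.1 m n) (h₂ q q' hq.2 hq'.2 m n)
    _ = ε := add_halves ε

lemma StronglyAlmostConvTo.const_smul (c : ℂ) (hx : StronglyAlmostConvTo x L) :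
    StronglyAlmostConvTo (c • x) (c • L) := by
  intro ε hε
  obtain ⟨Q, hQ⟩ := hx (ε / (‖c‖ + 1)) (by positivity)
  refine ⟨Q, fun q q' hq hq' m n => ?_⟩
  have hlt := hQ q q' hq hq' m n
  rw [lt_div_iff₀ (by positivity)] at hlt
  calc windowAvg (c • x) (c • L) q q' m n = ‖c‖ * windowAvg x L q q' m n :=
        windowAvg_smul c x L q q' m n
    _ ≤ windowAvg x L q q' m n * (‖c‖ + 1) := by
        nlinarith [windowAvg_nonneg x L q q' m n]
    _ < ε := hlt

lemma StronglyAlmostConvTo.comp_swap (hx : StronglyAlmostConvTo x L) :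
    StronglyAlmostConvTo (x ∘ Prod.swap) L := by
  intro ε hε
  obtain ⟨Q, hQ⟩ := hx ε hε
  refine ⟨Q, fun q q' hq hq' m n => ?_⟩
  exact (windowAvg_comp_swap x L q q' m n).trans_lt (hQ q' q hq' hq n m)

lemma StronglyAlmostConvTo.shiftFst (hx : StronglyAlmostConvTo x L) :
    StronglyAlmostConvTo (_root_.shiftFst x) L := by
  intro ε hε
  obtain ⟨Q₁, h₁⟩ := hx (ε / 2) (half_pos hε)
  obtain ⟨Q₂, h₂⟩ := exists_nat_gt (2 * ‖L‖ / ε)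
  refine ⟨max Q₁ Q₂, fun q q' hq hq' m n => ?_⟩
  rw [max_le_iff] at hq hq'
  have hcorner : ‖L‖ / ((q : ℝ) + 1) < ε / 2 := by
    have : (Q₂ : ℝ) ≤ q := by exact_mod_cast hq.2
    rw [div_lt_iff₀ hε] at h₂
    rw [div_lt_iff₀ (by positivity)]
    nlinarith
  calc windowAvg (_root_.shiftFst x) L q q' m n
      ≤ ‖L‖ / ((q : ℝ) + 1) + windowAvg x L q q' (m - 1) n := windowAvg_shiftFst_le x L q q' m n
    _ < ε / 2 + ε / 2 := add_lt_add hcorner (h₁ q q' hq.1 hq'.1 (m - 1) n)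
    _ = ε := add_halves ε

lemma StronglyAlmostConvTo.shiftSnd (hx : StronglyAlmostConvTo x L) :
    StronglyAlmostConvTo (_root_.shiftSnd x) L :=
  -- `shiftSnd x` is definitionally `shiftFst (x ∘ Prod.swap) ∘ Prod.swap`
  hx.comp_swap.shiftFst.comp_swap

theorem StronglyAlmostConvTo.btrans (r s t u : ℝ) (hx : StronglyAlmostConvTo x L) :
    StronglyAlmostConvTo (Btrans r s t u x) (((r + s) * (t + u) : ℂ) * L) := by
  have h := ((hx.shiftSnd.shiftFst.const_smul (s * u)).add (hx.shiftFst.const_smul (s * t))).add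
    ((hx.shiftSnd.const_smul (r * u)).add (hx.const_smul (r * t)))
  rw [Btrans_eq_shifts, add_assoc]
  convert h using 1
  simp only [smul_eq_mul]
  ring

end

theorem stmt7_general (r t : ℝ) :
    (∀ (x : ℕ × ℕ → ℂ) (L : ℂ), StronglyAlmostConvTo x L →
      StronglyAlmostConvTo (Btrans r (-r) t (-t) x) 0) ∧
    {x : ℕ × ℕ → ℂ | ∃ L, StronglyAlmostConvTo x L} ⊆
      {x : ℕ × ℕ → ℂ | ∃ L, StronglyAlmostConvTo (Btrans r (-r) t (-t) x) L} := by
  have null (x : ℕ × ℕ → ℂ) (L : ℂ) (hx : StronglyAlmostConvTo x L) :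
      StronglyAlmostConvTo (Btrans r (-r) t (-t) x) 0 := by
    simpa using hx.btrans r (-r) t (-t)
  exact ⟨null, fun x ⟨L, hL⟩ => ⟨0, null x L hL⟩⟩

/-- With `s = −r`, `u = −t`: if `x` is strongly almost convergent (to some
`L`), then `B(r,−r,t,−t)x` is strongly almost null; in particular `[C_f] ⊆ B[C_f]`. -/
theorem stmt7 (r t : ℝ) (hr : r ≠ 0) (ht : t ≠ 0) :
    (∀ (x : ℕ × ℕ → ℂ) (L : ℂ), StronglyAlmostConvTo x L →
      StronglyAlmostConvTo (Btrans r (-r) t (-t) x) 0) ∧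
    {x : ℕ × ℕ → ℂ | ∃ L, StronglyAlmostConvTo x L} ⊆
      {x : ℕ × ℕ → ℂ | ∃ L, StronglyAlmostConvTo (Btrans r (-r) t (-t) x) L} :=
  stmt7_general r t
end

section
/- Let r, s, t, u be nonzero real numbers. The double sequence x defined by x_{kl} = (1/(rt)) Σ_{i=0}^{k} Σ_{j=0}^{l} (−s/r)^{k−i} (−u/t)^{l−j} (−1)^j satisfies (B(r,s,t,u)x)_{kl} = (−1)^l for all k, l ∈ ℕ, and x belongs to B(C_f) but not to B[C_f]; hence the inclusion B[C_f] ⊆ B(C_f) is strict. -/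
open Finset

/-!
`B(r,s,t,u)` is `r t` times the product of the backward differences `f m - a f (m-1)` in the
two indices, with `a = -s/r` and `a = -u/t`; each is inverted by the geometric convolution
`Σ_{k ≤ m} a^(m-k) f k`, which is how `Binv` is built, so `B (Binv y) = y`. For `y = (-1)^l`
every window sum in `l` has modulus at most `1`, so the averages over `(q+1) × (q'+1)` blocks
tend to `0` uniformly, while `‖1 - L‖ + ‖-1 - L‖ ≥ 2` keeps the averages of `‖y - L‖` at least
`1` on blocks of even width, for every `L`. Strong almost convergence implies almost
convergence by the triangle inequality, which gives the strict inclusion.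
-/

def geomConv (a : ℂ) (f : ℕ → ℂ) (m : ℕ) : ℂ :=
  ∑ k ∈ range (m + 1), a ^ (m - k) * f k

def backDiff (a : ℂ) (f : ℕ → ℂ) (m : ℕ) : ℂ :=
  f m - a * (if m = 0 then 0 else f (m - 1))

lemma geomConv_zero (a : ℂ) (f : ℕ → ℂ) : geomConv a f 0 = f 0 := by
  simp [geomConv]

lemma geomConv_succ (a : ℂ) (f : ℕ → ℂ) (m : ℕ) :
    geomConv a f (m + 1) = a * geomConv a f m + f (m + 1) := by
  rw [geomConv, sum_range_succ, Nat.sub_self, pow_zero, one_mul, geomConv, mul_sum]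
  congr 1
  refine sum_congr rfl fun k hk => ?_
  rw [Nat.sub_add_comm (mem_range_succ_iff.mp hk), pow_succ]
  ring

lemma backDiff_geomConv (a : ℂ) (f : ℕ → ℂ) (m : ℕ) : backDiff a (geomConv a f) m = f m := by
  cases m with
  | zero => simp [backDiff, geomConv_zero]
  | succ m => simp [backDiff, geomConv_succ]

lemma backDiff_const_mul (a c : ℂ) (f : ℕ → ℂ) (m : ℕ) :
    backDiff a (fun k => c * f k) m = c * backDiff a f m := by
  unfold backDiff
  split_ifs <;> ring

lemma Btrans_apply_eq_backDiff {r t : ℝ} (hr : r ≠ 0) (ht : t ≠ 0) (s u : ℝ)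
    (x : ℕ × ℕ → ℂ) (m n : ℕ) :
    Btrans r s t u x (m, n) =
      (r * t : ℂ) * backDiff (-u / t) (fun l => backDiff (-s / r) (fun k => x (k, l)) m) n := by
  have hr' : (r : ℂ) ≠ 0 := Complex.ofReal_ne_zero.mpr hr
  have ht' : (t : ℂ) ≠ 0 := Complex.ofReal_ne_zero.mpr ht
  simp only [Btrans, backDiff]
  by_cases hm : m = 0 <;> by_cases hn : n = 0 <;> simp [hm, hn] <;> field_simp <;> ring

lemma Binv_apply_eq_geomConv (r s t u : ℝ) (y : ℕ × ℕ → ℂ) (m n : ℕ) :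
    Binv r s t u y (m, n) = (1 / (r * t : ℂ)) *
      geomConv (-s / r) (fun k => geomConv (-u / t) (fun l => y (k, l)) n) m := by
  simp only [Binv, geomConv, mul_sum, mul_assoc]

theorem Btrans_Binv {r t : ℝ} (hr : r ≠ 0) (ht : t ≠ 0) (s u : ℝ) (y : ℕ × ℕ → ℂ) :
    Btrans r s t u (Binv r s t u y) = y := by
  have hrt : (r * t : ℂ) ≠ 0 := by exact_mod_cast mul_ne_zero hr ht
  funext ⟨m, n⟩
  simp only [Btrans_apply_eq_backDiff hr ht, Binv_apply_eq_geomConv, backDiff_const_mul,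
    backDiff_geomConv]
  rw [← mul_assoc, mul_one_div_cancel hrt, one_mul]

lemma norm_one_div_succ_mul_succ (q q' : ℕ) :
    ‖1 / (((q : ℂ) + 1) * ((q' : ℂ) + 1))‖ = 1 / (((q : ℝ) + 1) * ((q' : ℝ) + 1)) := by
  simp only [← Nat.cast_succ, ← Nat.cast_mul, norm_div, norm_one, Complex.norm_natCast]

theorem StronglyAlmostConvTo.almostConvTo {x : ℕ × ℕ → ℂ} {L : ℂ}
    (h : StronglyAlmostConvTo x L) : AlmostConvTo x L := by
  intro ε hε
  obtain ⟨Q, hQ⟩ := h ε hε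
  refine ⟨Q, fun q q' hq hq' m n => lt_of_le_of_lt ?_ (hQ q q' hq hq' m n)⟩
  have hcentre : (1 / (((q : ℂ) + 1) * ((q' : ℂ) + 1))) *
      (∑ k ∈ range (q + 1), ∑ l ∈ range (q' + 1), x (m + k, n + l)) - L =
      (1 / (((q : ℂ) + 1) * ((q' : ℂ) + 1))) *
        ∑ k ∈ range (q + 1), ∑ l ∈ range (q' + 1), (x (m + k, n + l) - L) := by
    simp only [sum_sub_distrib, sum_const, card_range, nsmul_eq_mul]
    push_cast
    field_simp
  rw [hcentre, norm_mul, norm_one_div_succ_mul_succ]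
  gcongr
  exact (norm_sum_le _ _).trans (sum_le_sum fun k _ => norm_sum_le _ _)

theorem almostConvTo_zero_of_norm_window_sum_le (f : ℕ → ℂ) (C : ℝ)
    (hC : ∀ n q, ‖∑ l ∈ range (q + 1), f (n + l)‖ ≤ C) :
    AlmostConvTo (fun p => f p.2) 0 := by
  intro ε hε
  obtain ⟨Q, hQ⟩ := exists_nat_gt (C / ε)
  refine ⟨Q, fun q q' _ hq' m n => ?_⟩
  have hq'C : C < ε * ((q' : ℝ) + 1) := by
    have : (Q : ℝ) ≤ q' := by exact_mod_cast hq'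
    rw [div_lt_iff₀ hε] at hQ
    nlinarith
  have havg : (1 / (((q : ℂ) + 1) * ((q' : ℂ) + 1))) *
      (∑ k ∈ range (q + 1), ∑ l ∈ range (q' + 1), f (n + l)) - 0 =
      (∑ l ∈ range (q' + 1), f (n + l)) / ((q' + 1 : ℕ) : ℂ) := by
    simp only [sub_zero, sum_const, card_range, nsmul_eq_mul]
    push_cast
    field_simp
  calc ‖(1 / (((q : ℂ) + 1) * ((q' : ℂ) + 1))) *
        (∑ k ∈ range (q + 1), ∑ l ∈ range (q' + 1), f (n + l)) - 0‖
      = ‖∑ l ∈ range (q' + 1), f (n + l)‖ / ((q' : ℝ) + 1) := by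
        rw [havg, norm_div, Complex.norm_natCast]
        push_cast
        rfl
    _ ≤ C / ((q' : ℝ) + 1) := by gcongr; exact hC n q'
    _ < ε := by rwa [div_lt_iff₀ (by positivity)]

lemma norm_window_sum_neg_one_pow_le_one (n q : ℕ) :
    ‖∑ l ∈ range (q + 1), (-1 : ℂ) ^ (n + l)‖ ≤ 1 := by
  simp_rw [pow_add, ← mul_sum, norm_mul, norm_pow, norm_neg, norm_one, one_pow, one_mul,
    neg_one_geom_sum]
  split_ifs <;> simp

lemma two_mul_le_sum_norm_neg_one_pow_sub (L : ℂ) (M : ℕ) :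
    2 * (M : ℝ) ≤ ∑ l ∈ range (2 * M), ‖(-1 : ℂ) ^ l - L‖ := by
  induction M with
  | zero => simp
  | succ M ih =>
    have hpair : 2 ≤ ‖(1 : ℂ) - L‖ + ‖-1 - L‖ := by
      calc (2 : ℝ) = ‖(1 - L) - (-1 - L)‖ := by norm_num
        _ ≤ ‖1 - L‖ + ‖-1 - L‖ := norm_sub_le _ _
    rw [Nat.mul_succ, sum_range_succ, sum_range_succ, pow_succ, pow_mul, neg_one_sq, one_pow,
      one_mul]
    push_cast
    linarith

theorem not_stronglyAlmostConvTo_neg_one_pow (L : ℂ) :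
    ¬ StronglyAlmostConvTo (fun p => (-1 : ℂ) ^ p.2) L := by
  intro h
  obtain ⟨Q, hQ⟩ := h 1 one_pos
  have hlt := hQ Q (2 * Q + 1) le_rfl (by omega) 0 0
  have hrow : ∀ k, 2 * ((Q : ℝ) + 1) ≤ ∑ l ∈ range (2 * Q + 1 + 1),
      ‖(fun p : ℕ × ℕ => (-1 : ℂ) ^ p.2) (0 + k, 0 + l) - L‖ := fun k => by
    simpa [Nat.mul_succ] using two_mul_le_sum_norm_neg_one_pow_sub L (Q + 1)
  have hsum := sum_le_sum fun k (_ : k ∈ range (Q + 1)) => hrow k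
  rw [sum_const, card_range, nsmul_eq_mul] at hsum
  rw [one_div, inv_mul_lt_iff₀ (by positivity), mul_one] at hlt
  push_cast at hsum hlt
  linarith

theorem stmt12_general (r s t u : ℝ) (hr : r ≠ 0) (ht : t ≠ 0) :
    Btrans r s t u (Binv r s t u (fun p => (-1 : ℂ) ^ p.2)) = (fun p => (-1 : ℂ) ^ p.2) ∧
    (∃ L : ℂ, AlmostConvTo
      (Btrans r s t u (Binv r s t u (fun p => (-1 : ℂ) ^ p.2))) L) ∧
    (¬ ∃ L : ℂ, StronglyAlmostConvTo
      (Btrans r s t u (Binv r s t u (fun p => (-1 : ℂ) ^ p.2))) L) ∧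
    {x : ℕ × ℕ → ℂ | ∃ L, StronglyAlmostConvTo (Btrans r s t u x) L} ⊂
      {x : ℕ × ℕ → ℂ | ∃ L, AlmostConvTo (Btrans r s t u x) L} := by
  have hB := Btrans_Binv hr ht s u (fun p => (-1 : ℂ) ^ p.2)
  have halmost : ∃ L,
      AlmostConvTo (Btrans r s t u (Binv r s t u (fun p => (-1 : ℂ) ^ p.2))) L := by
    rw [hB]
    exact ⟨0, almostConvTo_zero_of_norm_window_sum_le _ 1 norm_window_sum_neg_one_pow_le_one⟩
  have hnot : ¬ ∃ L,
      StronglyAlmostConvTo (Btrans r s t u (Binv r s t u (fun p => (-1 : ℂ) ^ p.2))) L := by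
    rw [hB]
    exact fun ⟨L, hL⟩ => not_stronglyAlmostConvTo_neg_one_pow L hL
  have hsubset : {x : ℕ × ℕ → ℂ | ∃ L, StronglyAlmostConvTo (Btrans r s t u x) L} ⊆
      {x : ℕ × ℕ → ℂ | ∃ L, AlmostConvTo (Btrans r s t u x) L} :=
    fun _ ⟨L, hL⟩ => ⟨L, hL.almostConvTo⟩
  exact ⟨hB, halmost, hnot, (Set.ssubset_iff_of_subset hsubset).mpr ⟨_, halmost, hnot⟩⟩

/-- The sequence
`x_{kl} = (1/(rt)) Σ_{i=0}^{k} Σ_{j=0}^{l} (−s/r)^{k−i} (−u/t)^{l−j} (−1)^j` satisfies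
`(B(r,s,t,u)x)_{kl} = (−1)^l`, and `x ∈ B(C_f) \ B[C_f]`; hence `B[C_f] ⊂ B(C_f)`
strictly. -/
theorem stmt12 (r s t u : ℝ) (hr : r ≠ 0) (hs : s ≠ 0) (ht : t ≠ 0) (hu : u ≠ 0) :
    Btrans r s t u (Binv r s t u (fun p => (-1 : ℂ) ^ p.2)) = (fun p => (-1 : ℂ) ^ p.2) ∧
    (∃ L : ℂ, AlmostConvTo
      (Btrans r s t u (Binv r s t u (fun p => (-1 : ℂ) ^ p.2))) L) ∧
    (¬ ∃ L : ℂ, StronglyAlmostConvTo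
      (Btrans r s t u (Binv r s t u (fun p => (-1 : ℂ) ^ p.2))) L) ∧
    {x : ℕ × ℕ → ℂ | ∃ L, StronglyAlmostConvTo (Btrans r s t u x) L} ⊂
      {x : ℕ × ℕ → ℂ | ∃ L, AlmostConvTo (Btrans r s t u x) L} :=
  stmt12_general r s t u hr ht
end
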